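/- arXiv:0907.4241 — 2 statements merged into one kernel-verified Lean document; each statement's English description precedes it below -/
import Mathlib

section
/- Let S = ⟨A⟩ be the gluing of affine semigroups S_1 = ⟨A_1⟩ and S_2 = ⟨A_2⟩ with G(S_1) ∩ G(S_2) = dℤ, d ∈ S_1 ∩ S_2 \ {0}. Then every factorization of d in S (with respect to A = A_1 ∪ A_2) is either a factorization of d in S_1 or a factorization of d in S_2; in particular d is a Betti element of S. -/
/-!
Split a factorization `w` of `d` as `x + y = d`, with `x` the part coming from `A₁` and `y` the
part coming from `A₂`. Then `x = d - y` lies in `G(S₁) ∩ G(S₂) = dℤ`, say `x = k d`. If `k ≤ 0`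
then `-x ∈ S`, and if `k ≥ 1` then `-y = (k - 1) d ∈ S`; since `S` is reduced, `x = 0` or
`y = 0`, and as no generator is zero the corresponding half of `w` vanishes. Consequently an
`R`-chain starting at a factorization of `d` in `S₁` never leaves `S₁`, so it cannot reach a
factorization of `d` in `S₂`.
-/

open Finset

variable {M : Type*} [AddCommMonoid M] {r : ℕ}

/-- The factorization homomorphism associated to the generating tuple `A`. -/
def phi (A : Fin r → M) (u : Fin r → ℕ) : M := ∑ i, u i • A i

/-- One step of the relation `R`: two factorizations of `a` with nonzero dot product. -/
def step (A : Fin r → M) (a : M) (u v : Fin r → ℕ) : Prop :=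
  phi A u = a ∧ phi A v = a ∧ (∑ i, u i * v i) ≠ 0

/-- The relation `R` on the fiber of `a`: connected by a chain of factorizations with
consecutive nonzero dot products. -/
def Rrel (A : Fin r → M) (a : M) : (Fin r → ℕ) → (Fin r → ℕ) → Prop :=
  Relation.ReflTransGen (step A a)

/-- `a` is a Betti element: its fiber has more than one `R`-class. -/
def IsBetti (A : Fin r → M) (a : M) : Prop :=
  ∃ u v : Fin r → ℕ, phi A u = a ∧ phi A v = a ∧ ¬ Rrel A a u v

/-- `a` is Betti-minimal: a Betti element minimal with respect to `b ≺ a ↔ a - b ∈ S`. -/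
def BettiMinimal (A : Fin r → M) (a : M) : Prop :=
  IsBetti A a ∧ ∀ b : M, IsBetti A b → (∃ c : M, a = b + c) → b = a

/-- `a` has a unique presentation: exactly two factorizations, with disjoint support. -/
def HasUniquePres (A : Fin r → M) (a : M) : Prop :=
  ∃ u v : Fin r → ℕ, u ≠ v ∧ {w : Fin r → ℕ | phi A w = a} = {u, v} ∧
    (∑ i, u i * v i) = 0

/-- The monoid generated by `A` is uniquely presented: every Betti element has exactly two
factorizations, with disjoint support. -/
def UniquelyPresented (A : Fin r → M) : Prop :=
  ∀ a : M, IsBetti A a → HasUniquePres A a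

section Factorizations

variable {r₁ r₂ : ℕ}

theorem phi_zero (A : Fin r → M) : phi A 0 = 0 := by
  simp [phi]

theorem phi_mem {S : Type*} [SetLike S M] [AddSubmonoidClass S M] {s : S} {A : Fin r → M}
    (hA : ∀ i, A i ∈ s) (u : Fin r → ℕ) : phi A u ∈ s :=
  sum_mem fun i _ => nsmul_mem (hA i) _

theorem exists_phi_eq_of_mem_closure {A : Fin r → M} {x : M}
    (hx : x ∈ AddSubmonoid.closure (Set.range A)) : ∃ u, phi A u = x := by
  obtain ⟨u, rfl⟩ := AddSubmonoid.mem_closure_range_iff_of_fintype.1 hx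
  exact ⟨u, rfl⟩

theorem phi_append (A₁ : Fin r₁ → M) (A₂ : Fin r₂ → M) (w : Fin (r₁ + r₂) → ℕ) :
    phi (Fin.append A₁ A₂) w =
      phi A₁ (fun i => w (Fin.castAdd r₂ i)) + phi A₂ (fun j => w (Fin.natAdd r₁ j)) := by
  simp [phi, Fin.sum_univ_add]

theorem phi_append_append (A₁ : Fin r₁ → M) (A₂ : Fin r₂ → M) (u : Fin r₁ → ℕ)
    (v : Fin r₂ → ℕ) : phi (Fin.append A₁ A₂) (Fin.append u v) = phi A₁ u + phi A₂ v := by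
  simp [phi_append]

theorem Rrel.natAdd_eq_zero {A : Fin (r₁ + r₂) → M} {a : M} {u v : Fin (r₁ + r₂) → ℕ}
    (hsplit : ∀ w, phi A w = a →
      (∀ j : Fin r₂, w (Fin.natAdd r₁ j) = 0) ∨ ∀ i : Fin r₁, w (Fin.castAdd r₂ i) = 0)
    (h : Rrel A a u v) (hu : ∀ j, u (Fin.natAdd r₁ j) = 0) : ∀ j, v (Fin.natAdd r₁ j) = 0 := by
  induction h with
  | refl => exact hu
  | tail _ hstep ih =>
    obtain ⟨-, hc, hdot⟩ := hstep
    refine (hsplit _ hc).resolve_right fun hc₁ => hdot ?_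
    simp [Fin.sum_univ_add, hc₁, ih]

theorem isBetti_append {A₁ : Fin r₁ → M} {A₂ : Fin r₂ → M} {a : M} (ha : a ≠ 0)
    (ha₁ : a ∈ AddSubmonoid.closure (Set.range A₁))
    (ha₂ : a ∈ AddSubmonoid.closure (Set.range A₂))
    (hsplit : ∀ w, phi (Fin.append A₁ A₂) w = a →
      (∀ j : Fin r₂, w (Fin.natAdd r₁ j) = 0) ∨ ∀ i : Fin r₁, w (Fin.castAdd r₂ i) = 0) :
    IsBetti (Fin.append A₁ A₂) a := by
  obtain ⟨u₁, hu₁⟩ := exists_phi_eq_of_mem_closure ha₁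
  obtain ⟨u₂, hu₂⟩ := exists_phi_eq_of_mem_closure ha₂
  refine ⟨Fin.append u₁ 0, Fin.append 0 u₂, by simp [phi_append_append, phi_zero, hu₁],
    by simp [phi_append_append, phi_zero, hu₂], fun hR => ha ?_⟩
  have hu₂0 : u₂ = 0 := funext fun j => by
    simpa using hR.natAdd_eq_zero hsplit (by simp) j
  rw [← hu₂, hu₂0, phi_zero]

end Factorizations

section Reduced

variable {G : Type*} [AddCommGroup G] {S : AddSubmonoid G}

theorem eq_zero_of_sum_eq_zero_of_reduced (hred : ∀ x ∈ S, -x ∈ S → x = 0) {ι : Type*}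
    [DecidableEq ι] {s : Finset ι} {f : ι → G} (hf : ∀ i ∈ s, f i ∈ S)
    (hsum : ∑ i ∈ s, f i = 0) {i : ι} (hi : i ∈ s) : f i = 0 := by
  rw [← add_sum_erase s f hi] at hsum
  refine hred _ (hf i hi) ?_
  rw [neg_eq_of_add_eq_zero_left ((add_comm _ _).trans hsum)]
  exact sum_mem fun j hj => hf j (mem_of_mem_erase hj)

theorem phi_eq_zero_of_reduced [IsAddTorsionFree G] (hred : ∀ x ∈ S, -x ∈ S → x = 0)
    {A : Fin r → G} (hAS : ∀ i, A i ∈ S) (hA : ∀ i, A i ≠ 0) {w : Fin r → ℕ}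
    (hw : phi A w = 0) : w = 0 :=
  funext fun i => (nsmul_eq_zero_iff_left (hA i)).1 <|
    eq_zero_of_sum_eq_zero_of_reduced hred (fun i _ => nsmul_mem (hAS i) _) hw (mem_univ i)

theorem zsmul_mem_of_nonneg {d : G} (hd : d ∈ S) {k : ℤ} (hk : 0 ≤ k) : k • d ∈ S := by
  lift k to ℕ using hk
  simpa using nsmul_mem hd k

theorem eq_zero_or_eq_zero_of_add_eq_of_inf_eq_zmultiples (hred : ∀ x ∈ S, -x ∈ S → x = 0)
    {H₁ H₂ : AddSubgroup G} {d x y : G} (hglue : H₁ ⊓ H₂ = AddSubgroup.zmultiples d)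
    (hdS : d ∈ S) (hd₂ : d ∈ H₂) (hxS : x ∈ S) (hyS : y ∈ S) (hx₁ : x ∈ H₁) (hy₂ : y ∈ H₂)
    (hxy : x + y = d) : x = 0 ∨ y = 0 := by
  have hx₂ : x ∈ H₂ := by
    rw [eq_sub_of_add_eq hxy]
    exact sub_mem hd₂ hy₂
  have hxd : x ∈ AddSubgroup.zmultiples d := hglue ▸ AddSubgroup.mem_inf.2 ⟨hx₁, hx₂⟩
  obtain ⟨k, rfl⟩ := AddSubgroup.mem_zmultiples_iff.1 hxd
  rcases le_or_gt k 0 with hk | hk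
  · refine Or.inl (hred _ hxS ?_)
    rw [← neg_zsmul]
    exact zsmul_mem_of_nonneg hdS (by omega)
  · refine Or.inr (hred _ hyS ?_)
    have hy : -y = (k - 1) • d := by rw [sub_zsmul, one_zsmul, eq_sub_of_add_eq' hxy]; abel
    rw [hy]
    exact zsmul_mem_of_nonneg hdS (by omega)

theorem forall_natAdd_eq_zero_or_forall_castAdd_eq_zero_of_gluing [IsAddTorsionFree G]
    {r₁ r₂ : ℕ} {A₁ : Fin r₁ → G} {A₂ : Fin r₂ → G}
    (hred : ∀ x ∈ AddSubmonoid.closure (Set.range (Fin.append A₁ A₂)),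
      -x ∈ AddSubmonoid.closure (Set.range (Fin.append A₁ A₂)) → x = 0)
    (hA : ∀ i, Fin.append A₁ A₂ i ≠ 0) {d : G}
    (hd₂ : d ∈ AddSubmonoid.closure (Set.range A₂))
    (hglue : AddSubgroup.closure (Set.range A₁) ⊓ AddSubgroup.closure (Set.range A₂)
      = AddSubgroup.zmultiples d)
    (w : Fin (r₁ + r₂) → ℕ) (hw : phi (Fin.append A₁ A₂) w = d) :
    (∀ j : Fin r₂, w (Fin.natAdd r₁ j) = 0) ∨ ∀ i : Fin r₁, w (Fin.castAdd r₂ i) = 0 := by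
  set S := AddSubmonoid.closure (Set.range (Fin.append A₁ A₂))
  have hS₁ : ∀ i, A₁ i ∈ S := fun i =>
    AddSubmonoid.subset_closure ⟨Fin.castAdd r₂ i, Fin.append_left A₁ A₂ i⟩
  have hS₂ : ∀ j, A₂ j ∈ S := fun j =>
    AddSubmonoid.subset_closure ⟨Fin.natAdd r₁ j, Fin.append_right A₁ A₂ j⟩
  have hdS : d ∈ S := AddSubmonoid.closure_le.2 (Set.range_subset_iff.2 hS₂) hd₂
  have hdG₂ : d ∈ AddSubgroup.closure (Set.range A₂) :=
    AddSubmonoid.closure_le.2 AddSubgroup.subset_closure hd₂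
  rw [phi_append] at hw
  rcases eq_zero_or_eq_zero_of_add_eq_of_inf_eq_zmultiples hred hglue hdS hdG₂
    (phi_mem hS₁ _) (phi_mem hS₂ _)
    (phi_mem (fun i => AddSubgroup.subset_closure (Set.mem_range_self i)) _)
    (phi_mem (fun j => AddSubgroup.subset_closure (Set.mem_range_self j)) _) hw with h | h
  · right
    refine congrFun (phi_eq_zero_of_reduced hred hS₁ (fun i => ?_) h)
    simpa using hA (Fin.castAdd r₂ i)
  · left
    refine congrFun (phi_eq_zero_of_reduced hred hS₂ (fun j => ?_) h)
    simpa using hA (Fin.natAdd r₁ j)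

end Reduced

theorem stmt6_general {n r₁ r₂ : ℕ} (A₁ : Fin r₁ → (Fin n → ℤ)) (A₂ : Fin r₂ → (Fin n → ℤ))
    -- the combined family minimally generates S
    (hmin : ∀ i : Fin (r₁ + r₂), ¬ ∃ u : Fin (r₁ + r₂) → ℕ,
      u i = 0 ∧ phi (Fin.append A₁ A₂) u = Fin.append A₁ A₂ i)
    -- S is reduced
    (hred : ∀ x ∈ AddSubmonoid.closure (Set.range (Fin.append A₁ A₂)),
      -x ∈ AddSubmonoid.closure (Set.range (Fin.append A₁ A₂)) → x = 0)
    (d : Fin n → ℤ) (hd0 : d ≠ 0)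
    (hd1 : d ∈ AddSubmonoid.closure (Set.range A₁))
    (hd2 : d ∈ AddSubmonoid.closure (Set.range A₂))
    (hglue : AddSubgroup.closure (Set.range A₁) ⊓ AddSubgroup.closure (Set.range A₂)
      = AddSubgroup.zmultiples d) :
    (∀ w : Fin (r₁ + r₂) → ℕ, phi (Fin.append A₁ A₂) w = d →
      (∀ j : Fin r₂, w (Fin.natAdd r₁ j) = 0) ∨ (∀ i : Fin r₁, w (Fin.castAdd r₂ i) = 0)) ∧
    IsBetti (Fin.append A₁ A₂) d := by
  have hA : ∀ i, Fin.append A₁ A₂ i ≠ 0 := fun i h0 =>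
    hmin i ⟨0, rfl, by rw [h0, phi_zero]⟩
  have hsplit := forall_natAdd_eq_zero_or_forall_castAdd_eq_zero_of_gluing hred hA hd2 hglue
  exact ⟨hsplit, isBetti_append hd0 hd1 hd2 hsplit⟩

/-- If `S` is the gluing of `S₁` and `S₂` with `G(S₁) ∩ G(S₂) = dℤ`, every factorization of
`d` in `S` is either a factorization of `d` in `S₁` or in `S₂`; in particular `d` is a Betti
element of `S`. -/
theorem stmt6 {n r₁ r₂ : ℕ} (A₁ : Fin r₁ → (Fin n → ℤ)) (A₂ : Fin r₂ → (Fin n → ℤ))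
    (hdisj : Disjoint (Set.range A₁) (Set.range A₂))
    -- the combined family minimally generates S
    (hmin : ∀ i : Fin (r₁ + r₂), ¬ ∃ u : Fin (r₁ + r₂) → ℕ,
      u i = 0 ∧ phi (Fin.append A₁ A₂) u = Fin.append A₁ A₂ i)
    -- S is reduced
    (hred : ∀ x ∈ AddSubmonoid.closure (Set.range (Fin.append A₁ A₂)),
      -x ∈ AddSubmonoid.closure (Set.range (Fin.append A₁ A₂)) → x = 0)
    (d : Fin n → ℤ) (hd0 : d ≠ 0)
    (hd1 : d ∈ AddSubmonoid.closure (Set.range A₁))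
    (hd2 : d ∈ AddSubmonoid.closure (Set.range A₂))
    (hglue : AddSubgroup.closure (Set.range A₁) ⊓ AddSubgroup.closure (Set.range A₂)
      = AddSubgroup.zmultiples d) :
    (∀ w : Fin (r₁ + r₂) → ℕ, phi (Fin.append A₁ A₂) w = d →
      (∀ j : Fin r₂, w (Fin.natAdd r₁ j) = 0) ∨ (∀ i : Fin r₁, w (Fin.castAdd r₂ i) = 0)) ∧
    IsBetti (Fin.append A₁ A₂) d :=
  stmt6_general A₁ A₂ hmin hred d hd0 hd1 hd2 hglue
end

section
/- Let m_1, m_2 be relatively prime integers greater than one, and a, b, c nonnegative integers with a ≥ 2, b + c ≥ 2, gcd(a, b m_1 + c m_2) = 1, and S = ⟨a m_1, a m_2, b m_1 + c m_2⟩. Then S is uniquely presented if and only if 0 < b < m_2 and 0 < c < m_1. -/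
open Finset

variable {M : Type*} [AddCommMonoid M] {r : ℕ}

/-!
Write `d = b m₁ + c m₂`, so that `S` is the gluing of `a⟨m₁, m₂⟩` and `⟨d⟩`. Trading `a` copies of
`d` for `b` copies of `a m₁` and `c` copies of `a m₂`, and `m₁` copies of `a m₂` for `m₂` copies of
`a m₁`, are `R`-steps in the fibre of any element other than `β₁ = a m₁ m₂` and `β₂ = a d`. They
move every factorization to one whose third coordinate is `< a` and second is `< m₁`, and such a
factorization is unique because `gcd(a, d) = gcd(m₁, m₂) = 1`; so `β₁` and `β₂` are the only
candidates for Betti elements. If `0 < b < m₂` and `0 < c < m₁`, their fibres are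
`{(m₂,0,0), (0,m₁,0)}` and `{(b,c,0), (0,0,a)}`. Otherwise one of these fibres contains an
`R`-isolated factorization and two others: `(0,0,a)` for `β₂` if `b ≥ m₂` or `c ≥ m₁`, and
`(m₂,0,0)` or `(0,m₁,0)` for `β₁` if `b = 0` or `c = 0`.
-/

section Factorizations

variable {A : Fin r → M} {n : M}

theorem phi_add (A : Fin r → M) (u v : Fin r → ℕ) : phi A (u + v) = phi A u + phi A v := by
  simp only [phi, Pi.add_apply, add_smul, sum_add_distrib]

theorem step_symm {u v : Fin r → ℕ} (h : step A n u v) : step A n v u := by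
  obtain ⟨hu, hv, hdot⟩ := h
  exact ⟨hv, hu, by simpa only [mul_comm] using hdot⟩

theorem Rrel.symm {u v : Fin r → ℕ} (h : Rrel A n u v) : Rrel A n v u := by
  induction h with
  | refl => exact .refl
  | tail _ hstep ih => exact .head (step_symm hstep) ih

theorem Rrel.phi_eq {u v : Fin r → ℕ} (h : Rrel A n u v) (hu : phi A u = n) : phi A v = n := by
  induction h with
  | refl => exact hu
  | tail _ hstep _ => exact hstep.2.1

theorem Rrel.eq_of_isolated {u v : Fin r → ℕ}
    (hiso : ∀ w, phi A w = n → ∑ i, u i * w i ≠ 0 → w = u) (h : Rrel A n u v) : v = u := by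
  induction h with
  | refl => rfl
  | tail _ hstep ih =>
    subst ih
    exact hiso _ hstep.2.1 hstep.2.2

theorem sum_add_mul_add_ne_zero {w p q : Fin r → ℕ} (hw : w ≠ 0) :
    ∑ i, (w + p) i * (w + q) i ≠ 0 := by
  obtain ⟨i, hi⟩ := Function.ne_iff.mp hw
  intro h
  have := (Finset.sum_eq_zero_iff.mp h) i (mem_univ i)
  simp only [Pi.add_apply, Pi.zero_apply, mul_eq_zero, Nat.add_eq_zero_iff] at this hi
  tauto

/-- Consecutive factorizations `w + q + j • p` and `w + (j + 1) • p` share `w + j • p`, which is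
nonzero unless `n = phi A p`. -/
theorem rrel_add_nsmul {p q : Fin r → ℕ} (hpq : phi A p = phi A q) (hn : n ≠ phi A p) :
    ∀ (k : ℕ) (w : Fin r → ℕ), phi A (w + k • p) = n → Rrel A n (w + k • p) (w + k • q) := by
  intro k
  induction k with
  | zero => intro w _; simpa only [zero_smul] using .refl
  | succ k ih =>
    intro w hw
    rw [succ_nsmul, ← add_assoc] at hw
    have hw' : phi A (w + q + k • p) = n := by
      rwa [add_right_comm, phi_add, ← hpq, ← phi_add]
    have hne : w + k • p ≠ 0 := by
      rintro h
      rw [h, zero_add] at hw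
      exact hn hw.symm
    have hstep : step A n (w + k • p + p) (w + q + k • p) := by
      refine ⟨hw, hw', ?_⟩
      rw [add_right_comm w q]
      exact sum_add_mul_add_ne_zero hne
    rw [succ_nsmul, ← add_assoc, show w + (k + 1) • q = w + q + k • q by rw [succ_nsmul]; abel]
    exact .head hstep (ih _ hw')

theorem rrel_of_eq_add_nsmul {p q u v w : Fin r → ℕ} {k : ℕ} (hpq : phi A p = phi A q)
    (hn : n ≠ phi A p) (hu : phi A u = n) (hup : u = w + k • p) (hvq : v = w + k • q) :
    Rrel A n u v := by
  subst hup hvq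
  exact rrel_add_nsmul hpq hn k w hu

theorem not_hasUniquePres_of_three {u v w : Fin r → ℕ} (hu : phi A u = n) (hv : phi A v = n)
    (hw : phi A w = n) (huv : u ≠ v) (huw : u ≠ w) (hvw : v ≠ w) : ¬ HasUniquePres A n := by
  rintro ⟨p, q, -, hfib, -⟩
  have mem : ∀ x, phi A x = n → x = p ∨ x = q := fun x hx => by
    have : x ∈ ({p, q} : Set (Fin r → ℕ)) := hfib ▸ hx
    simpa using this
  rcases mem u hu with rfl | rfl <;> rcases mem v hv with rfl | rfl <;>
    rcases mem w hw with rfl | rfl <;> simp_all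

theorem not_uniquelyPresented_of_isolated {u v w : Fin r → ℕ} (hu : phi A u = n)
    (hv : phi A v = n) (hw : phi A w = n) (huv : u ≠ v) (huw : u ≠ w) (hvw : v ≠ w)
    (hiso : ∀ x, phi A x = n → ∑ i, u i * x i ≠ 0 → x = u) : ¬ UniquelyPresented A :=
  fun hup => not_hasUniquePres_of_three hu hv hw huv huw hvw
    (hup n ⟨u, v, hu, hv, fun h => huv (h.eq_of_isolated hiso).symm⟩)

end Factorizations

section Arithmetic

variable {m n x y x' y' : ℕ}

theorem modEq_of_mul_add_mul_eq (hcop : Nat.Coprime m n) (h : x * m + y * n = x' * m + y' * n) :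
    y ≡ y' [MOD m] := by
  have hx : x * m ≡ x' * m [MOD m] := by simp [Nat.ModEq]
  exact Nat.ModEq.cancel_right_of_coprime hcop (hx.add_left_cancel (h ▸ rfl))

theorem le_of_modEq_of_lt (h : x ≡ y [MOD m]) (hx : x < m) : x ≤ y :=
  calc x = y % m := (Nat.mod_eq_of_lt hx).symm.trans h
    _ ≤ y := Nat.mod_le y m

theorem eq_or_eq_of_mul_add_mul_eq_mul (hm : 0 < m) (hn : 0 < n) (hcop : Nat.Coprime m n)
    (h : x * m + y * n = m * n) : x = n ∧ y = 0 ∨ x = 0 ∧ y = m := by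
  have hnx : n ∣ x := Nat.modEq_zero_iff_dvd.mp
    (modEq_of_mul_add_mul_eq hcop.symm (x := y) (x' := m) (y' := 0) (by linarith))
  obtain rfl | hx := Nat.eq_zero_or_pos x
  · exact .inr ⟨rfl, Nat.eq_of_mul_eq_mul_right hn (by simpa using h)⟩
  · obtain rfl : x = n := le_antisymm (by nlinarith) (Nat.le_of_dvd hx hnx)
    exact .inl ⟨rfl, by nlinarith⟩

theorem eq_of_mul_add_mul_eq_of_lt (hcop : Nat.Coprime m n) (hx' : x' < n) (hy' : y' < m)
    (h : x * m + y * n = x' * m + y' * n) : x = x' ∧ y = y' := by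
  have hy : y' ≤ y := le_of_modEq_of_lt (modEq_of_mul_add_mul_eq hcop h).symm hy'
  have hx : x' ≤ x := le_of_modEq_of_lt
    (modEq_of_mul_add_mul_eq hcop.symm (x := y) (x' := y') (by linarith)).symm hx'
  constructor <;> nlinarith

end Arithmetic

def gens (m₁ m₂ a b c : ℕ) : Fin 3 → ℕ := ![a * m₁, a * m₂, b * m₁ + c * m₂]

section Gluing

variable {m₁ m₂ a b c n : ℕ}

theorem phi_gens (u : Fin 3 → ℕ) :
    phi (gens m₁ m₂ a b c) u = a * (u 0 * m₁ + u 1 * m₂) + u 2 * (b * m₁ + c * m₂) := by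
  simp [phi, gens, Fin.sum_univ_three]
  ring

theorem phi_gens_vecCons (x y z : ℕ) :
    phi (gens m₁ m₂ a b c) ![x, y, z] = a * (x * m₁ + y * m₂) + z * (b * m₁ + c * m₂) := by
  simp [phi_gens]

theorem dvd_of_phi_gens_eq_mul (hcop : Nat.Coprime a (b * m₁ + c * m₂)) {u : Fin 3 → ℕ} {X : ℕ}
    (h : phi (gens m₁ m₂ a b c) u = a * X) : a ∣ u 2 := by
  rw [phi_gens] at h
  exact Nat.modEq_zero_iff_dvd.mp
    (modEq_of_mul_add_mul_eq hcop (x := u 0 * m₁ + u 1 * m₂) (x' := X) (y' := 0) (by linarith))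

theorem eq_of_phi_gens_eq_beta₂ (hm₁ : 0 < m₁) (hm₂ : 0 < m₂) (hd : 0 < b * m₁ + c * m₂)
    (hcop : Nat.Coprime a (b * m₁ + c * m₂)) {w : Fin 3 → ℕ}
    (h : phi (gens m₁ m₂ a b c) w = a * (b * m₁ + c * m₂)) (hw : w 2 ≠ 0) : w = ![0, 0, a] := by
  have ha : a ≤ w 2 := Nat.le_of_dvd (Nat.pos_of_ne_zero hw) (dvd_of_phi_gens_eq_mul hcop h)
  rw [phi_gens] at h
  have hw₂ : w 2 = a :=
    le_antisymm (le_of_mul_le_mul_right (h ▸ Nat.le_add_left _ _) hd) ha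
  rw [hw₂, add_eq_right, mul_eq_zero] at h
  have h₀₁ : w 0 * m₁ + w 1 * m₂ = 0 := h.resolve_left (Nat.pos_of_ne_zero (hw₂ ▸ hw)).ne'
  simp only [Nat.add_eq_zero_iff, mul_eq_zero, hm₁.ne', hm₂.ne', or_false] at h₀₁
  ext i
  fin_cases i <;> simp [h₀₁, hw₂]

theorem exists_of_phi_gens_eq_beta₁ (hm₁ : 0 < m₁) (hm₂ : 0 < m₂) (hcopm : Nat.Coprime m₁ m₂)
    (ha : 0 < a) (hcop : Nat.Coprime a (b * m₁ + c * m₂)) {w : Fin 3 → ℕ}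
    (h : phi (gens m₁ m₂ a b c) w = a * (m₁ * m₂)) :
    ∃ k, w 2 = a * k ∧
      (w 0 + k * b = m₂ ∧ w 1 + k * c = 0 ∨ w 0 + k * b = 0 ∧ w 1 + k * c = m₁) := by
  obtain ⟨k, hk⟩ := dvd_of_phi_gens_eq_mul hcop h
  refine ⟨k, hk, eq_or_eq_of_mul_add_mul_eq_mul hm₁ hm₂ hcopm (Nat.eq_of_mul_eq_mul_left ha ?_)⟩
  rw [← h, phi_gens, hk]
  ring

theorem setOf_phi_gens_eq_beta₁ (hm₁ : 0 < m₁) (hm₂ : 0 < m₂) (hcopm : Nat.Coprime m₁ m₂)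
    (ha : 0 < a) (hcop : Nat.Coprime a (b * m₁ + c * m₂)) (hb : 0 < b) (hc : 0 < c) :
    {w | phi (gens m₁ m₂ a b c) w = a * (m₁ * m₂)} = {![m₂, 0, 0], ![0, m₁, 0]} := by
  ext w
  simp only [Set.mem_ofPred_eq, Set.mem_insert_iff, Set.mem_singleton_iff]
  constructor
  · intro h
    obtain ⟨k, hk, ⟨h₀, h₁⟩ | ⟨h₀, h₁⟩⟩ := exists_of_phi_gens_eq_beta₁ hm₁ hm₂ hcopm ha hcop h
    · obtain rfl : k = 0 := by simpa [hc.ne'] using (Nat.add_eq_zero_iff.mp h₁).2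
      left; ext i; fin_cases i <;> simp_all
    · obtain rfl : k = 0 := by simpa [hb.ne'] using (Nat.add_eq_zero_iff.mp h₀).2
      right; ext i; fin_cases i <;> simp_all
  · rintro (rfl | rfl) <;> rw [phi_gens_vecCons] <;> ring

theorem setOf_phi_gens_eq_beta₂ (hm₁ : 0 < m₁) (hm₂ : 0 < m₂) (hcopm : Nat.Coprime m₁ m₂)
    (ha : 0 < a) (hcop : Nat.Coprime a (b * m₁ + c * m₂)) (hb : b < m₂) (hc : c < m₁)
    (hd : 0 < b * m₁ + c * m₂) :
    {w | phi (gens m₁ m₂ a b c) w = a * (b * m₁ + c * m₂)} = {![b, c, 0], ![0, 0, a]} := by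
  ext w
  simp only [Set.mem_ofPred_eq, Set.mem_insert_iff, Set.mem_singleton_iff]
  constructor
  · intro h
    by_cases hw : w 2 = 0
    · rw [phi_gens, hw, zero_mul, add_zero] at h
      obtain ⟨h₀, h₁⟩ := eq_of_mul_add_mul_eq_of_lt hcopm hb hc (Nat.eq_of_mul_eq_mul_left ha h)
      left; ext i; fin_cases i <;> simp [h₀, h₁, hw]
    · exact .inr (eq_of_phi_gens_eq_beta₂ hm₁ hm₂ hd hcop h hw)
  · rintro (rfl | rfl) <;> rw [phi_gens_vecCons] <;> ring

theorem exists_rrel_gens_normal (hm₁ : 0 < m₁) (ha : 0 < a) (hn₁ : n ≠ a * (m₁ * m₂))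
    (hn₂ : n ≠ a * (b * m₁ + c * m₂)) {u : Fin 3 → ℕ} (hu : phi (gens m₁ m₂ a b c) u = n) :
    ∃ v, phi (gens m₁ m₂ a b c) v = n ∧ v 1 < m₁ ∧ v 2 < a ∧ Rrel (gens m₁ m₂ a b c) n u v := by
  set y := u 1 + u 2 / a * c
  have r₁ : Rrel (gens m₁ m₂ a b c) n u ![u 0 + u 2 / a * b, y, u 2 % a] :=
    rrel_of_eq_add_nsmul (p := ![0, 0, a]) (q := ![b, c, 0]) (w := ![u 0, u 1, u 2 % a])
      (k := u 2 / a) (by simp only [phi_gens_vecCons]; ring)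
      (by simpa only [phi_gens_vecCons, zero_mul, add_zero, zero_add, mul_comm a] using hn₂) hu
      (by ext i; fin_cases i <;> simp [Nat.mod_add_div'])
      (by ext i; fin_cases i <;> simp [y, mul_comm])
  have r₂ : Rrel (gens m₁ m₂ a b c) n ![u 0 + u 2 / a * b, y, u 2 % a]
      ![u 0 + u 2 / a * b + y / m₁ * m₂, y % m₁, u 2 % a] :=
    rrel_of_eq_add_nsmul (p := ![0, m₁, 0]) (q := ![m₂, 0, 0])
      (w := ![u 0 + u 2 / a * b, y % m₁, u 2 % a]) (k := y / m₁)
      (by simp only [phi_gens_vecCons]; ring)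
      (by simpa only [phi_gens_vecCons, zero_mul, add_zero, zero_add] using hn₁) (r₁.phi_eq hu)
      (by ext i; fin_cases i <;> simp [Nat.mod_add_div'])
      (by ext i; fin_cases i <;> simp [mul_comm])
  have r := Relation.ReflTransGen.trans r₁ r₂
  exact ⟨_, Rrel.phi_eq r hu, by simpa using Nat.mod_lt _ hm₁, by simpa using Nat.mod_lt _ ha, r⟩

theorem eq_of_phi_gens_eq_of_lt (hcopm : Nat.Coprime m₁ m₂) (hcop : Nat.Coprime a (b * m₁ + c * m₂))
    {u v : Fin 3 → ℕ} (hu : phi (gens m₁ m₂ a b c) u = n) (hv : phi (gens m₁ m₂ a b c) v = n)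
    (hu₁ : u 1 < m₁) (hv₁ : v 1 < m₁) (hu₂ : u 2 < a) (hv₂ : v 2 < a) : u = v := by
  rw [phi_gens] at hu hv
  have h₂ : u 2 = v 2 := (modEq_of_mul_add_mul_eq hcop (x := u 0 * m₁ + u 1 * m₂)
    (x' := v 0 * m₁ + v 1 * m₂) (by linarith)).eq_of_lt_of_lt hu₂ hv₂
  have h₀₁ : u 0 * m₁ + u 1 * m₂ = v 0 * m₁ + v 1 * m₂ :=
    Nat.eq_of_mul_eq_mul_left (Nat.zero_lt_of_lt hu₂) (by rw [h₂] at hu; linarith)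
  have h₁ : u 1 = v 1 := (modEq_of_mul_add_mul_eq hcopm h₀₁).eq_of_lt_of_lt hu₁ hv₁
  have h₀ : u 0 = v 0 :=
    Nat.eq_of_mul_eq_mul_right (Nat.zero_lt_of_lt hu₁) (by rw [h₁] at h₀₁; linarith)
  ext i
  fin_cases i <;> assumption

theorem eq_or_eq_of_isBetti_gens (hm₁ : 0 < m₁) (ha : 0 < a) (hcopm : Nat.Coprime m₁ m₂)
    (hcop : Nat.Coprime a (b * m₁ + c * m₂)) (h : IsBetti (gens m₁ m₂ a b c) n) :
    n = a * (m₁ * m₂) ∨ n = a * (b * m₁ + c * m₂) := by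
  by_contra! hn
  obtain ⟨u, v, hu, hv, huv⟩ := h
  obtain ⟨u', hu', hu₁, hu₂, ru⟩ := exists_rrel_gens_normal hm₁ ha hn.1 hn.2 hu
  obtain ⟨v', hv', hv₁, hv₂, rv⟩ := exists_rrel_gens_normal hm₁ ha hn.1 hn.2 hv
  rw [eq_of_phi_gens_eq_of_lt hcopm hcop hu' hv' hu₁ hv₁ hu₂ hv₂] at ru
  exact huv (Relation.ReflTransGen.trans ru rv.symm)

theorem uniquelyPresented_gens (hm₁ : 0 < m₁) (hm₂ : 0 < m₂) (hcopm : Nat.Coprime m₁ m₂)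
    (ha : 0 < a) (hcop : Nat.Coprime a (b * m₁ + c * m₂)) (hb : 0 < b) (hbm : b < m₂)
    (hc : 0 < c) (hcm : c < m₁) : UniquelyPresented (gens m₁ m₂ a b c) := by
  intro n hn
  rcases eq_or_eq_of_isBetti_gens hm₁ ha hcopm hcop hn with rfl | rfl
  · refine ⟨![m₂, 0, 0], ![0, m₁, 0], fun h => ?_,
      setOf_phi_gens_eq_beta₁ hm₁ hm₂ hcopm ha hcop hb hc, by simp [Fin.sum_univ_three]⟩
    simpa [hm₂.ne'] using congrFun h 0
  · refine ⟨![b, c, 0], ![0, 0, a], fun h => ?_,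
      setOf_phi_gens_eq_beta₂ hm₁ hm₂ hcopm ha hcop hbm hcm (by positivity),
      by simp [Fin.sum_univ_three]⟩
    simpa [ha.ne'] using (congrFun h 2).symm

theorem not_uniquelyPresented_gens_of_mul_add_mul_eq (hm₁ : 0 < m₁) (hm₂ : 0 < m₂) (ha : 0 < a)
    (hd : 0 < b * m₁ + c * m₂) (hcop : Nat.Coprime a (b * m₁ + c * m₂)) {x y : ℕ}
    (h : x * m₁ + y * m₂ = b * m₁ + c * m₂) (hx : x ≠ b) :
    ¬ UniquelyPresented (gens m₁ m₂ a b c) := by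
  refine not_uniquelyPresented_of_isolated (n := a * (b * m₁ + c * m₂)) (u := ![0, 0, a])
    (v := ![b, c, 0]) (w := ![x, y, 0]) ?_ ?_ ?_ ?_ ?_ ?_ ?_
  · rw [phi_gens_vecCons]; ring
  · rw [phi_gens_vecCons]; ring
  · rw [phi_gens_vecCons, h]; ring
  · intro e; simpa [ha.ne'] using congrFun e 2
  · intro e; simpa [ha.ne'] using congrFun e 2
  · exact fun e => hx (by simpa using (congrFun e 0).symm)
  · intro w hw hdot
    exact eq_of_phi_gens_eq_beta₂ hm₁ hm₂ hd hcop hw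
      (right_ne_zero_of_mul (by simpa [Fin.sum_univ_three] using hdot))

theorem not_uniquelyPresented_gens_of_b_eq_zero (hm₁ : 0 < m₁) (hm₂ : 0 < m₂)
    (hcopm : Nat.Coprime m₁ m₂) (ha : 0 < a) (hcop : Nat.Coprime a (0 * m₁ + c * m₂))
    (hc : 0 < c) (hcm : c < m₁) : ¬ UniquelyPresented (gens m₁ m₂ a 0 c) := by
  refine not_uniquelyPresented_of_isolated (n := a * (m₁ * m₂)) (u := ![m₂, 0, 0])
    (v := ![0, m₁, 0]) (w := ![0, m₁ - c, a]) ?_ ?_ ?_ ?_ ?_ ?_ ?_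
  · rw [phi_gens_vecCons]; ring
  · rw [phi_gens_vecCons]; ring
  · rw [phi_gens_vecCons]; zify [hcm.le]; ring
  · intro e; simpa [hm₂.ne'] using congrFun e 0
  · intro e; simpa [hm₂.ne'] using congrFun e 0
  · intro e; simpa [ha.ne'] using (congrFun e 2).symm
  · intro x hx hdot
    have hx₀ : x 0 ≠ 0 := right_ne_zero_of_mul (by simpa [Fin.sum_univ_three] using hdot)
    obtain ⟨k, hk, ⟨h₀, h₁⟩ | ⟨h₀, -⟩⟩ := exists_of_phi_gens_eq_beta₁ hm₁ hm₂ hcopm ha hcop hx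
    · obtain rfl : k = 0 := by simpa [hc.ne'] using (Nat.add_eq_zero_iff.mp h₁).2
      ext i; fin_cases i <;> simp_all
    · simp_all

theorem not_uniquelyPresented_gens_of_c_eq_zero (hm₁ : 0 < m₁) (hm₂ : 0 < m₂)
    (hcopm : Nat.Coprime m₁ m₂) (ha : 0 < a) (hcop : Nat.Coprime a (b * m₁ + 0 * m₂))
    (hb : 0 < b) (hbm : b < m₂) : ¬ UniquelyPresented (gens m₁ m₂ a b 0) := by
  refine not_uniquelyPresented_of_isolated (n := a * (m₁ * m₂)) (u := ![0, m₁, 0])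
    (v := ![m₂, 0, 0]) (w := ![m₂ - b, 0, a]) ?_ ?_ ?_ ?_ ?_ ?_ ?_
  · rw [phi_gens_vecCons]; ring
  · rw [phi_gens_vecCons]; ring
  · rw [phi_gens_vecCons]; zify [hbm.le]; ring
  · intro e; simpa [hm₂.ne'] using (congrFun e 0).symm
  · intro e; simpa [hm₁.ne'] using congrFun e 1
  · intro e; simpa [ha.ne'] using (congrFun e 2).symm
  · intro x hx hdot
    have hx₁ : x 1 ≠ 0 := right_ne_zero_of_mul (by simpa [Fin.sum_univ_three] using hdot)
    obtain ⟨k, hk, ⟨-, h₁⟩ | ⟨h₀, h₁⟩⟩ := exists_of_phi_gens_eq_beta₁ hm₁ hm₂ hcopm ha hcop hx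
    · simp_all
    · obtain rfl : k = 0 := by simpa [hb.ne'] using (Nat.add_eq_zero_iff.mp h₀).2
      ext i; fin_cases i <;> simp_all

theorem not_uniquelyPresented_gens_of_le (hm₁ : 0 < m₁) (hm₂ : 0 < m₂) (ha : 0 < a)
    (hd : 0 < b * m₁ + c * m₂) (hcop : Nat.Coprime a (b * m₁ + c * m₂)) (h : m₂ ≤ b ∨ m₁ ≤ c) :
    ¬ UniquelyPresented (gens m₁ m₂ a b c) := by
  rcases h with hb | hc
  · exact not_uniquelyPresented_gens_of_mul_add_mul_eq hm₁ hm₂ ha hd hcop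
      (x := b - m₂) (y := c + m₁) (by zify [hb]; ring) (by omega)
  · exact not_uniquelyPresented_gens_of_mul_add_mul_eq hm₁ hm₂ ha hd hcop
      (x := b + m₂) (y := c - m₁) (by zify [hc]; ring) (by omega)

end Gluing

theorem stmt12_general (m₁ m₂ a b c : ℕ) (hm₁ : 1 < m₁) (hm₂ : 1 < m₂)
    (hcopm : Nat.Coprime m₁ m₂) (ha : 2 ≤ a)
    (hcop : Nat.Coprime a (b * m₁ + c * m₂)) :
    UniquelyPresented ![a * m₁, a * m₂, b * m₁ + c * m₂] ↔
      (0 < b ∧ b < m₂ ∧ 0 < c ∧ c < m₁) := by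
  have hd : 0 < b * m₁ + c * m₂ :=
    Nat.pos_of_ne_zero fun h => by rw [h, Nat.coprime_zero_right] at hcop; omega
  replace hm₁ : 0 < m₁ := by omega
  replace hm₂ : 0 < m₂ := by omega
  replace ha : 0 < a := by omega
  refine ⟨fun hup => ?_, fun ⟨hb, hbm, hc, hcm⟩ =>
    uniquelyPresented_gens hm₁ hm₂ hcopm ha hcop hb hbm hc hcm⟩
  by_contra hnot
  by_cases hle : m₂ ≤ b ∨ m₁ ≤ c
  · exact not_uniquelyPresented_gens_of_le hm₁ hm₂ ha hd hcop hle hup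
  obtain rfl | rfl : b = 0 ∨ c = 0 := by omega
  · exact not_uniquelyPresented_gens_of_b_eq_zero hm₁ hm₂ hcopm ha hcop
      (Nat.pos_of_ne_zero (by rintro rfl; simp at hd)) (by omega) hup
  · exact not_uniquelyPresented_gens_of_c_eq_zero hm₁ hm₂ hcopm ha hcop
      (Nat.pos_of_ne_zero (by rintro rfl; simp at hd)) (by omega) hup

/-- With `m₁, m₂` coprime and `> 1`, `a ≥ 2`, `b + c ≥ 2`, `gcd(a, b m₁ + c m₂) = 1`, the
numerical semigroup `S = ⟨a m₁, a m₂, b m₁ + c m₂⟩` is uniquely presented iff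
`0 < b < m₂` and `0 < c < m₁`. -/
theorem stmt12 (m₁ m₂ a b c : ℕ) (hm₁ : 1 < m₁) (hm₂ : 1 < m₂)
    (hcopm : Nat.Coprime m₁ m₂) (ha : 2 ≤ a) (hbc : 2 ≤ b + c)
    (hcop : Nat.Coprime a (b * m₁ + c * m₂)) :
    UniquelyPresented ![a * m₁, a * m₂, b * m₁ + c * m₂] ↔
      (0 < b ∧ b < m₂ ∧ 0 < c ∧ c < m₁) :=
  stmt12_general m₁ m₂ a b c hm₁ hm₂ hcopm ha hcop
end
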